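/- arXiv:1911.12047 — 3 statements merged into one kernel-verified Lean document; each statement's English description precedes it below -/
import Mathlib

section
/- For every integer m ≥ 2, the symmetric 4×4 integer matrix Q(Γ'_m) = ![![0, 1, 1, 1], ![1, 2m-1, 0, 0], ![1, 0, -m, 0], ![1, 0, 0, 2m+1]], viewed as a real quadratic form x ↦ xᵀ Q(Γ'_m) x on ℝ⁴, is indefinite with vanishing signature: it has exactly two positive eigenvalues and exactly two negative eigenvalues (counted with multiplicity). -/
open Matrix

/-- If all eigenvalues of a real symmetric matrix are nonpositive, then `-A` is
positive semidefinite. -/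
lemma negSemidef_aux {n : Type*} [Fintype n] [DecidableEq n] {A : Matrix n n ℝ}
    (hA : A.IsHermitian) (h : ∀ i, hA.eigenvalues i ≤ 0) : (-A).PosSemidef := by
  have : -A = (hA.eigenvectorUnitary : Matrix n n ℝ) *
      Matrix.diagonal (fun i => -(RCLike.ofReal ∘ hA.eigenvalues) i) *
      (star hA.eigenvectorUnitary : Matrix n n ℝ) := by
    conv_lhs => rw [hA.spectral_theorem]
    rw [← Matrix.diagonal_neg, Matrix.mul_neg, Matrix.neg_mul, Unitary.conjStarAlgAut_apply]
  rw [this]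
  refine (Matrix.posSemidef_diagonal_iff.mpr ?_).mul_mul_conjTranspose_same _
  intro i
  simpa using h i

/-- Parity of the cardinality of a finite set of indices at which a function is
negative, in terms of the sign of the product. -/
lemma even_card_iff_prod_pos {α : Type*} (f : α → ℝ) (s : Finset α)
    (hneg : ∀ i ∈ s, f i < 0) : (Even s.card ↔ 0 < ∏ i ∈ s, f i) := by
  classical
  induction s using Finset.induction_on with
  | empty => simp
  | @insert a s ha ih =>
    have hfa : f a < 0 := hneg a (Finset.mem_insert_self a s)
    have hs : ∀ i ∈ s, f i < 0 := fun i hi => hneg i (Finset.mem_insert_of_mem hi)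
    have hprodne : ∏ i ∈ s, f i ≠ 0 :=
      Finset.prod_ne_zero_iff.mpr fun i hi => ne_of_lt (hs i hi)
    rw [Finset.card_insert_of_notMem ha, Finset.prod_insert ha, Nat.even_add_one, ih hs]
    constructor
    · intro hnp
      have : ∏ i ∈ s, f i < 0 := lt_of_le_of_ne (not_lt.mp hnp) hprodne
      exact mul_pos_of_neg_of_neg hfa this
    · intro hp hpos
      nlinarith

/-- for every integer `m ≥ 2`, the real symmetric matrix `Q(Γ'_m)` is
indefinite with vanishing signature: it has exactly two positive and exactly two
negative eigenvalues (counted with multiplicity). -/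
theorem stmt4 (m : ℤ) (hm : 2 ≤ m)
    (Q : Matrix (Fin 4) (Fin 4) ℝ)
    (hQ : Q = !![0, 1, 1, 1;
                 1, 2 * (m : ℝ) - 1, 0, 0;
                 1, 0, -(m : ℝ), 0;
                 1, 0, 0, 2 * (m : ℝ) + 1])
    (hherm : Q.IsHermitian) :
    (Finset.univ.filter fun i : Fin 4 => 0 < hherm.eigenvalues i).card = 2 ∧
    (Finset.univ.filter fun i : Fin 4 => hherm.eigenvalues i < 0).card = 2 := by
  set f : Fin 4 → ℝ := hherm.eigenvalues with hf
  -- determinant is 1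
  have hdet : Q.det = 1 := by
    subst hQ
    simp [Matrix.det_succ_row_zero, Fin.sum_univ_succ, Fin.succAbove, Fin.castSucc, Fin.castAdd, Fin.castLE]
    ring
  have hprod : ∏ i, f i = 1 := by
    have := hherm.det_eq_prod_eigenvalues
    rw [hdet] at this
    simpa using this.symm
  have hne : ∀ i, f i ≠ 0 := by
    intro i h
    have : ∏ j, f j = 0 := Finset.prod_eq_zero (Finset.mem_univ i) h
    rw [hprod] at this; norm_num at this
  have hmR : (2 : ℝ) ≤ (m : ℝ) := by exact_mod_cast hm
  -- there is a negative eigenvalue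
  have hexneg : ∃ i, f i < 0 := by
    by_contra hc
    push_neg at hc
    have hPS : Q.PosSemidef := hherm.posSemidef_iff_eigenvalues_nonneg.mpr (fun i => hc i)
    have h2 := hPS.dotProduct_mulVec_nonneg (Pi.single 2 1)
    rw [hQ] at h2
    simp [Matrix.mulVec_single, dotProduct, Fin.sum_univ_four] at h2
    linarith
  -- there is a positive eigenvalue
  have hexpos : ∃ i, 0 < f i := by
    by_contra hc
    push_neg at hc
    have hPS : (-Q).PosSemidef := negSemidef_aux hherm hc
    have h2 := hPS.dotProduct_mulVec_nonneg (Pi.single 3 1)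
    rw [hQ] at h2
    simp [Matrix.mulVec_single, dotProduct, Fin.sum_univ_four] at h2
    linarith
  set N : Finset (Fin 4) := Finset.univ.filter fun i => f i < 0 with hN
  set P : Finset (Fin 4) := Finset.univ.filter fun i => 0 < f i with hP
  have hcompl : Finset.univ.filter (fun i => ¬ f i < 0) = P := by
    apply Finset.filter_congr
    intro i _
    simp only [not_lt, eq_iff_iff]
    constructor
    · intro h; exact lt_of_le_of_ne h (Ne.symm (hne i))
    · intro h; exact le_of_lt h
  have hcard : N.card + P.card = 4 := by
    have := Finset.card_filter_add_card_filter_not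
      (s := (Finset.univ : Finset (Fin 4))) (p := fun i => f i < 0)
    rw [hcompl] at this
    simpa using this
  have hsplit : (∏ i ∈ N, f i) * ∏ i ∈ P, f i = 1 := by
    rw [← hprod]
    rw [← hcompl]
    exact Finset.prod_filter_mul_prod_filter_not _ _ _
  have hPpos : 0 < ∏ i ∈ P, f i :=
    Finset.prod_pos fun i hi => (Finset.mem_filter.mp hi).2
  have hNpos : 0 < ∏ i ∈ N, f i := by
    by_contra hc
    push_neg at hc
    nlinarith
  have hNeven : Even N.card :=
    (even_card_iff_prod_pos f N (fun i hi => (Finset.mem_filter.mp hi).2)).mpr hNpos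
  have hN1 : 1 ≤ N.card := by
    obtain ⟨i, hi⟩ := hexneg
    exact Finset.card_pos.mpr ⟨i, Finset.mem_filter.mpr ⟨Finset.mem_univ i, hi⟩⟩
  have hP1 : 1 ≤ P.card := by
    obtain ⟨i, hi⟩ := hexpos
    exact Finset.card_pos.mpr ⟨i, Finset.mem_filter.mpr ⟨Finset.mem_univ i, hi⟩⟩
  obtain ⟨k, hk⟩ := hNeven
  constructor
  · omega
  · omega
end

section
/- Let m ≥ 2 be an even integer and let Q = Q(Γ'_m) = ![![0, 1, 1, 1], ![1, 2m-1, 0, 0], ![1, 0, -m, 0], ![1, 0, 0, 2m+1]]. Then the vector ω = e_2 + e_4 = (0, 1, 0, 1) is a characteristic vector for Q, i.e., ωᵀ Q x ≡ xᵀ Q x (mod 2) for every x ∈ ℤ⁴, and ωᵀ Q ω = 4m. Consequently, since the signature of Q is 0, the Neumann–Siebenmann invariant (sign(Q) - ωᵀQω)/8 equals -m/2. -/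
open Matrix

/-- for even `m ≥ 2` and `Q = Q(Γ'_m)`, the vector `ω = (0,1,0,1)` is a
characteristic vector for `Q`, with `ωᵀQω = 4m`; consequently, since `sign(Q) = 0`,
the Neumann–Siebenmann invariant `(sign(Q) - ωᵀQω)/8` is `-m/2`. -/
theorem stmt5 (m : ℤ) (hm : 2 ≤ m) (heven : Even m)
    (Q : Matrix (Fin 4) (Fin 4) ℤ)
    (hQ : Q = !![0, 1, 1, 1;
                 1, 2 * m - 1, 0, 0;
                 1, 0, -m, 0;
                 1, 0, 0, 2 * m + 1])
    (ω : Fin 4 → ℤ) (hω : ω = ![0, 1, 0, 1]) :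
    (∀ x : Fin 4 → ℤ, ω ⬝ᵥ Q.mulVec x ≡ x ⬝ᵥ Q.mulVec x [ZMOD 2]) ∧
    ω ⬝ᵥ Q.mulVec ω = 4 * m ∧
    ((0 : ℤ) - ω ⬝ᵥ Q.mulVec ω) / 8 = -(m / 2) := by
  subst hQ hω
  obtain ⟨k, hk⟩ := heven
  have hY : ∀ x : Fin 4 → ℤ, (![0, 1, 0, 1] : Fin 4 → ℤ) ⬝ᵥ
      (!![0, 1, 1, 1; 1, 2 * m - 1, 0, 0; 1, 0, -m, 0; 1, 0, 0, 2 * m + 1]).mulVec x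
      = 2 * x 0 + (2 * m - 1) * x 1 + (2 * m + 1) * x 3 := by
    intro x
    simp [mulVec, dotProduct, Fin.sum_univ_four, Matrix.vecHead, Matrix.vecTail]
    ring
  have hX : ∀ x : Fin 4 → ℤ, x ⬝ᵥ
      (!![0, 1, 1, 1; 1, 2 * m - 1, 0, 0; 1, 0, -m, 0; 1, 0, 0, 2 * m + 1]).mulVec x
      = 2 * x 0 * x 1 + 2 * x 0 * x 2 + 2 * x 0 * x 3 + (2 * m - 1) * (x 1) ^ 2
        - m * (x 2) ^ 2 + (2 * m + 1) * (x 3) ^ 2 := by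
    intro x
    simp [mulVec, dotProduct, Fin.sum_univ_four, Matrix.vecHead, Matrix.vecTail]
    ring
  have hval : (![0, 1, 0, 1] : Fin 4 → ℤ) ⬝ᵥ
      (!![0, 1, 1, 1; 1, 2 * m - 1, 0, 0; 1, 0, -m, 0; 1, 0, 0, 2 * m + 1]).mulVec
      ![0, 1, 0, 1] = 4 * m := by
    rw [hY]; norm_num; rw [show (![0, 1, 0, 1] : Fin 4 → ℤ) 3 = 1 from rfl]; ring
  refine ⟨?_, hval, ?_⟩
  · intro x
    rw [hX, hY, Int.modEq_iff_dvd]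
    obtain ⟨p, hp⟩ : Even ((x 1 - 1) * x 1) := by simpa using Int.even_mul_succ_self (x 1 - 1)
    obtain ⟨q, hq⟩ : Even ((x 3 - 1) * x 3) := by simpa using Int.even_mul_succ_self (x 3 - 1)
    exact ⟨x 0 * x 1 + x 0 * x 2 + x 0 * x 3 - x 0 + (2 * m - 1) * p - k * x 2 ^ 2
      + (2 * m + 1) * q, by linear_combination (2 * m - 1) * hp + (2 * m + 1) * hq - x 2 ^ 2 * hk⟩
  · rw [hval]
    omega
end

section
/- Let M be the 5×5 integer matrix ![![1, -1, -1, -1, 0], ![0, 0, 1, 0, -1], ![0, 1, -1, 0, 0], ![0, 1, 0, -1, 0], ![0, 0, 1, -1, 1]]. There is no 5×5 integer matrix S that is a signed permutation matrix (i.e., S = D·P where P is a permutation matrix and D is diagonal with all diagonal entries ±1) such that every entry of the first three columns of S·M is nonnegative. (This is the combinatorial contradiction in the orientation argument: no automorphism of the standard negative diagonal form can simultaneously put the diagonal-basis representations of the π-fixed sphere F₁ and the π-invariant spheres F₂, F₃ into the nonnegative form required by the equivariant Yang–Mills orientation constraints.) -/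
open Matrix

/-- no signed permutation matrix `S` (an automorphism of the standard
diagonal form) makes every entry of the first three columns of `S * M` nonnegative,
where `M = C⁻¹` is the change-of-basis matrix for the plumbing bounding `Σ(3,4,5)`.
This is the combinatorial contradiction in the equivariant Yang–Mills orientation
argument. -/
theorem stmt10 (M : Matrix (Fin 5) (Fin 5) ℤ)
    (hM : M = !![1, -1, -1, -1, 0;
                 0, 0, 1, 0, -1;
                 0, 1, -1, 0, 0;
                 0, 1, 0, -1, 0;
                 0, 0, 1, -1, 1]) :
    ¬ ∃ S : Matrix (Fin 5) (Fin 5) ℤ,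
      (∃ (σ : Equiv.Perm (Fin 5)) (d : Fin 5 → ℤ),
        (∀ i, d i = 1 ∨ d i = -1) ∧
          S = Matrix.diagonal d * σ.permMatrix ℤ) ∧
      ∀ (i j : Fin 5), (j : ℕ) < 3 → 0 ≤ (S * M) i j := by
  rintro ⟨S, ⟨σ, d, hd, rfl⟩, hpos⟩
  subst hM
  set i := σ.symm 0 with hi
  have hσ : σ i = 0 := σ.apply_symm_apply 0
  have h1 := hpos i 0 (by norm_num)
  have h2 := hpos i 1 (by norm_num)
  rw [Matrix.mul_assoc, Equiv.Perm.permMatrix, PEquiv.toMatrix_toPEquiv_mul] at h1 h2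
  simp [Matrix.mul_apply, Matrix.diagonal_apply, hσ, Fin.sum_univ_five] at h1 h2
  rcases hd i with h | h <;> rw [h] at h1 h2 <;> linarith
end
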